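/- arXiv:2107.11601 — 5 statements merged into one kernel-verified Lean document; each statement's English description precedes it below -/
import Mathlib

section
/- Let G be a C4-free graph on n vertices (G contains no cycle of length four as a subgraph, not necessarily induced). Then the number of edges of G is at most n(1+√(4n-3))/4. -/
open Finset SimpleGraph

/-- A graph is `C4`-free if it contains no cycle of length four. -/
def C4Free {V : Type*} (G : SimpleGraph V) : Prop :=
  ∀ (v : V) (w : G.Walk v v), w.IsCycle → w.length ≠ 4

lemma common_le {V : Type*} (G : SimpleGraph V) [DecidableEq V] [Fintype V] [DecidableRel G.Adj]
    (hG : C4Free G) {x y : V} (hxy : x ≠ y) :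
    (G.neighborFinset x ∩ G.neighborFinset y).card ≤ 1 := by
  by_contra h
  push_neg at h
  obtain ⟨a, ha, b, hb, hab⟩ := Finset.one_lt_card.mp h
  simp only [Finset.mem_inter, SimpleGraph.mem_neighborFinset] at ha hb
  refine hG x (.cons ha.1 (.cons ha.2.symm (.cons hb.2 (.cons hb.1.symm .nil)))) ?_ rfl
  have nxa := G.ne_of_adj ha.1
  have nya := G.ne_of_adj ha.2
  have nxb := G.ne_of_adj hb.1
  have nyb := G.ne_of_adj hb.2
  constructor
  · constructor
    · simp [SimpleGraph.Walk.edges, Sym2.eq_iff]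
      aesop
    · simp
  · simp
    aesop

lemma double_count {V : Type*} [Fintype V] [DecidableEq V] (G : SimpleGraph V)
    [DecidableRel G.Adj] :
    ∑ p ∈ (Finset.univ : Finset V).offDiag,
        (G.neighborFinset p.1 ∩ G.neighborFinset p.2).card
      = ∑ v, (G.degree v * G.degree v - G.degree v) := by
  have h1 : ∀ p : V × V, (G.neighborFinset p.1 ∩ G.neighborFinset p.2).card
      = ∑ v, if G.Adj p.1 v ∧ G.Adj p.2 v then 1 else 0 := by
    intro p
    rw [← Finset.card_filter]
    congr 1
    ext v
    simp [mem_neighborFinset]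
  simp_rw [h1]
  rw [Finset.sum_comm]
  refine Finset.sum_congr rfl fun v _ => ?_
  rw [← Finset.card_filter]
  have : (Finset.univ : Finset V).offDiag.filter (fun p => G.Adj p.1 v ∧ G.Adj p.2 v)
      = (G.neighborFinset v).offDiag := by
    ext p
    simp [Finset.mem_offDiag, mem_neighborFinset, G.adj_comm]; tauto
  rw [this, Finset.offDiag_card, G.card_neighborFinset_eq_degree]

theorem stmt_0 {V : Type*} [Fintype V] (G : SimpleGraph V) [DecidableRel G.Adj]
    (hG : C4Free G) :
    (G.edgeFinset.card : ℝ) ≤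
      (Fintype.card V : ℝ) * (1 + Real.sqrt (4 * Fintype.card V - 3)) / 4 := by
  classical
  set n : ℕ := Fintype.card V with hn
  set e : ℕ := G.edgeFinset.card with he
  -- natural number counting bound
  have hnat : ∑ v, (G.degree v * G.degree v - G.degree v) ≤ n * n - n := by
    rw [← double_count]
    calc ∑ p ∈ (Finset.univ : Finset V).offDiag,
          (G.neighborFinset p.1 ∩ G.neighborFinset p.2).card
        ≤ ∑ p ∈ (Finset.univ : Finset V).offDiag, 1 := by
          refine Finset.sum_le_sum fun p hp => ?_
          exact common_le G hG (Finset.mem_offDiag.mp hp).2.2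
      _ = n * n - n := by
          rw [Finset.sum_const, smul_eq_mul, mul_one, Finset.offDiag_card,
            Finset.card_univ]
  -- cast to reals
  have hreal : ∑ v, ((G.degree v : ℝ) ^ 2 - G.degree v) ≤ (n : ℝ) ^ 2 - n := by
    have hterm : ∀ v : V, ((G.degree v : ℝ) ^ 2 - G.degree v)
        = ((G.degree v * G.degree v - G.degree v : ℕ) : ℝ) := by
      intro v
      rw [Nat.cast_sub (by nlinarith)]
      push_cast; ring
    simp_rw [hterm]
    rw [← Nat.cast_sum]
    calc ((∑ v, (G.degree v * G.degree v - G.degree v) : ℕ) : ℝ)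
        ≤ ((n * n - n : ℕ) : ℝ) := by exact_mod_cast hnat
      _ = (n : ℝ) ^ 2 - n := by rw [Nat.cast_sub (by nlinarith)]; push_cast; ring
  -- Cauchy–Schwarz and degree sum
  have hcs : ((∑ v, (G.degree v : ℝ)) ^ 2) ≤ (n : ℝ) * ∑ v, (G.degree v : ℝ) ^ 2 := by
    have := sq_sum_le_card_mul_sum_sq (s := (Finset.univ : Finset V))
      (f := fun v => (G.degree v : ℝ))
    simpa [Finset.card_univ] using this
  have hds : (∑ v, (G.degree v : ℝ)) = 2 * e := by
    exact_mod_cast congrArg (Nat.cast : ℕ → ℝ) G.sum_degrees_eq_twice_card_edges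
  rw [hds] at hcs
  have hsum : ∑ v, ((G.degree v : ℝ) ^ 2 - G.degree v)
      = (∑ v, (G.degree v : ℝ) ^ 2) - 2 * e := by
    rw [Finset.sum_sub_distrib, hds]
  rw [hsum] at hreal
  have hn0 : (0 : ℝ) ≤ n := Nat.cast_nonneg n
  have he0 : (0 : ℝ) ≤ e := Nat.cast_nonneg e
  -- main quadratic inequality
  have hq : 4 * (e : ℝ) ^ 2 ≤ 2 * e * n + n ^ 3 - n ^ 2 := by nlinarith
  have hs0 : (0 : ℝ) ≤ Real.sqrt (4 * n - 3) := Real.sqrt_nonneg _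
  by_cases hcase : 4 * (e : ℝ) ≤ n
  · nlinarith
  · push_neg at hcase
    have key : (4 * (e : ℝ) - n) ^ 2 ≤ (n : ℝ) ^ 2 * (4 * n - 3) := by nlinarith
    have h4 : 4 * (e : ℝ) - n ≤ Real.sqrt ((n : ℝ) ^ 2 * (4 * n - 3)) := by
      calc 4 * (e : ℝ) - n = Real.sqrt ((4 * (e : ℝ) - n) ^ 2) :=
            (Real.sqrt_sq (by linarith)).symm
        _ ≤ _ := Real.sqrt_le_sqrt key
    rw [Real.sqrt_mul (sq_nonneg _), Real.sqrt_sq hn0] at h4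
    linarith
end

section
/- Let G be a C4-free graph on n vertices, and let q be a nonnegative integer. Define the deficiency of a vertex u as f(u) = q + 1 - deg(u), and for a set A of vertices f(A) = Σ_{u∈A} f(u). Then for every vertex v of G, f(N(v)) ≥ q·deg(v) - n + 1, where N(v) is the neighborhood of v. -/
open SimpleGraph Finset

lemma c4free_cycle_aux {V : Type*} (G : SimpleGraph V) (hG : C4Free G) {v a w b : V}
    (h1 : G.Adj v a) (h2 : G.Adj a w) (h3 : G.Adj w b) (h4 : G.Adj b v)
    (hab : a ≠ b) (hwv : w ≠ v) : False := by
  have hc : ((Walk.cons h1 (Walk.cons h2 (Walk.cons h3 (Walk.cons h4 Walk.nil)))) :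
      G.Walk v v).IsCycle := by
    have := h1.ne; have := h2.ne; have := h3.ne; have := h4.ne
    simp [SimpleGraph.Walk.isCycle_def, SimpleGraph.Walk.isTrail_def, List.nodup_cons,
      Sym2.eq, Sym2.rel_iff']
    aesop
  exact hG v _ hc rfl

theorem stmt_1 {V : Type*} [Fintype V] (G : SimpleGraph V) [DecidableRel G.Adj]
    (hG : C4Free G) (q : ℕ) (v : V) :
    (∑ u ∈ G.neighborFinset v, ((q : ℤ) + 1 - G.degree u)) ≥
      (q : ℤ) * G.degree v - Fintype.card V + 1 := by
  classical
  have hdisj : ∀ a ∈ G.neighborFinset v, ∀ b ∈ G.neighborFinset v, a ≠ b →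
      Disjoint ((G.neighborFinset a).erase v) ((G.neighborFinset b).erase v) := by
    intro a ha b hb hab
    rw [Finset.disjoint_left]
    intro w hwa hwb
    rw [Finset.mem_erase, SimpleGraph.mem_neighborFinset] at hwa hwb
    rw [SimpleGraph.mem_neighborFinset] at ha hb
    exact c4free_cycle_aux G hG ha hwa.2 hwb.2.symm hb.symm hab hwa.1
  have hsub : ((G.neighborFinset v).biUnion (fun u => (G.neighborFinset u).erase v))
      ⊆ Finset.univ.erase v := by
    intro w hw
    rw [Finset.mem_biUnion] at hw
    obtain ⟨u, _, hw⟩ := hw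
    exact Finset.mem_erase.2 ⟨(Finset.mem_erase.1 hw).1, Finset.mem_univ w⟩
  have hcard : ∑ u ∈ G.neighborFinset v, ((G.neighborFinset u).erase v).card + 1
      ≤ Fintype.card V := by
    rw [← Finset.card_biUnion hdisj]
    have h1 : (Finset.univ.erase v).card + 1 = Fintype.card V :=
      Finset.card_erase_add_one (Finset.mem_univ v)
    have := Finset.card_le_card hsub
    omega
  have hdeg : ∀ u ∈ G.neighborFinset v,
      ((G.neighborFinset u).erase v).card + 1 = G.degree u := by
    intro u hu
    rw [SimpleGraph.mem_neighborFinset] at hu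
    rw [← SimpleGraph.card_neighborFinset_eq_degree]
    exact Finset.card_erase_add_one (by rwa [SimpleGraph.mem_neighborFinset, adj_comm])
  have key : ∑ u ∈ G.neighborFinset v, G.degree u + 1 ≤ Fintype.card V + G.degree v := by
    have : ∑ u ∈ G.neighborFinset v, G.degree u =
        ∑ u ∈ G.neighborFinset v, (((G.neighborFinset u).erase v).card + 1) :=
      Finset.sum_congr rfl (fun u hu => (hdeg u hu).symm)
    rw [this, Finset.sum_add_distrib, Finset.sum_const, smul_eq_mul, mul_one,
      SimpleGraph.card_neighborFinset_eq_degree]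
    omega
  have hsum : (∑ u ∈ G.neighborFinset v, ((q : ℤ) + 1 - G.degree u)) =
      ((q : ℤ) + 1) * G.degree v - ∑ u ∈ G.neighborFinset v, (G.degree u : ℤ) := by
    rw [Finset.sum_sub_distrib, Finset.sum_const, SimpleGraph.card_neighborFinset_eq_degree]
    ring
  have key' : (∑ u ∈ G.neighborFinset v, (G.degree u : ℤ)) + 1 ≤
      (Fintype.card V : ℤ) + G.degree v := by
    have := key
    exact_mod_cast this
  rw [hsum]
  linarith
end

section
/- Let ex(n, C4) denote the maximum number of edges in an n-vertex C4-free graph. Let q, r be integers with 1 ≤ r ≤ 0.3q, and let α be a real with 0.2 ≤ α ≤ 1. If ex(q²+q+1-r, C4) ≥ q(q+1)²/2 - αrq, then there exists an integer r₀ with r ≤ r₀ ≤ 3r such that ex(q²+q+1-r₀, C4) ≥ q(q+1)²/2 - αr₀q and ex(q²+q+1-r₀, C4) - ex(q²+q-r₀, C4) ≥ 0.2q. -/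
/-- `exC4 n` is the maximum number of edges in an `n`-vertex `C₄`-free graph. -/
noncomputable def exC4 (n : ℕ) : ℕ :=
  sSup {m | ∃ G : SimpleGraph (Fin n), C4Free G ∧ Nat.card G.edgeSet = m}

open Finset SimpleGraph

lemma no_common_pair {n : ℕ} {G : SimpleGraph (Fin n)} (hG : C4Free G) {v v' u w : Fin n}
    (hvv' : v ≠ v') (huw : u ≠ w) (h1 : G.Adj v u) (h2 : G.Adj v w)
    (h3 : G.Adj v' u) (h4 : G.Adj v' w) : False := by
  have hvu := h1.ne
  have hvw := h2.ne
  have hv'u := h3.ne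
  have hv'w := h4.ne
  let W : G.Walk v v := .cons h1 (.cons h3.symm (.cons h4 (.cons h2.symm .nil)))
  refine hG v W ?_ (by simp [W])
  rw [SimpleGraph.Walk.isCycle_def]
  refine ⟨?_, by simp [W], ?_⟩
  · rw [SimpleGraph.Walk.isTrail_def]
    simp only [W, SimpleGraph.Walk.edges_cons, SimpleGraph.Walk.edges_nil,
      List.nodup_cons, List.mem_cons, List.not_mem_nil, or_false, List.nodup_nil, and_true,
      Sym2.eq_iff]
    push_neg
    tauto
  · simp only [W, SimpleGraph.Walk.support_cons, SimpleGraph.Walk.support_nil,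
      List.tail_cons, List.nodup_cons, List.mem_cons, List.not_mem_nil, or_false,
      List.nodup_nil, and_true]
    push_neg
    tauto

lemma count_paths {n : ℕ} (G : SimpleGraph (Fin n)) [DecidableRel G.Adj] (hG : C4Free G) :
    ∑ v : Fin n, (G.degree v * G.degree v - G.degree v) ≤ n * n - n := by
  have key := Finset.card_le_card_of_injOn (α := (Σ _ : Fin n, Fin n × Fin n))
    (s := (Finset.univ : Finset (Fin n)).sigma (fun v => (G.neighborFinset v).offDiag))
    (t := (Finset.univ : Finset (Fin n)).offDiag)
    (fun t => t.2) ?_ ?_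
  · rw [Finset.card_sigma, Finset.offDiag_card, Finset.card_univ, Fintype.card_fin] at key
    simpa only [Finset.offDiag_card, SimpleGraph.card_neighborFinset_eq_degree] using key
  · intro a ha
    simp only [Finset.mem_sigma, Finset.mem_offDiag, SimpleGraph.mem_neighborFinset] at ha ⊢
    exact Finset.mem_offDiag.2 ⟨Finset.mem_univ _, Finset.mem_univ _, (Finset.mem_offDiag.1 (Finset.mem_sigma.1 ha).2).2.2⟩
  · rintro ⟨v, u, w⟩ ha ⟨v', u', w'⟩ hb hab
    simp only [Finset.coe_sigma, Set.mem_sigma_iff, Finset.mem_coe, Finset.mem_offDiag,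
      SimpleGraph.mem_neighborFinset] at ha hb
    simp only at hab
    rw [Prod.mk.injEq] at hab
    obtain ⟨huu', hww'⟩ := hab
    subst huu'; subst hww'
    by_cases hv : v = v'
    · subst hv; rfl
    · exact absurd (no_common_pair hG hv ha.2.2.2 ha.2.1 ha.2.2.1 hb.2.1 hb.2.2.1) not_false

lemma nat_le_mul_self (m : ℕ) : m ≤ m * m := by
  cases m with
  | zero => simp
  | succ k => exact Nat.le_mul_of_pos_left _ (Nat.succ_pos k)

lemma edge_bound {n : ℕ} (G : SimpleGraph (Fin n)) [DecidableRel G.Adj] (hG : C4Free G) :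
    4 * ((G.edgeFinset.card : ℝ)) ^ 2 ≤ (n : ℝ) ^ 3 - (n : ℝ) ^ 2 + 2 * G.edgeFinset.card * n := by
  have hc := count_paths G hG
  have h1 : (∑ v : Fin n, ((G.degree v : ℝ) ^ 2 - G.degree v)) ≤ (n : ℝ) ^ 2 - n := by
    have hcast : ((∑ v : Fin n, (G.degree v * G.degree v - G.degree v) : ℕ) : ℝ)
        = ∑ v : Fin n, ((G.degree v : ℝ) ^ 2 - G.degree v) := by
      rw [Nat.cast_sum]
      refine Finset.sum_congr rfl fun v _ => ?_
      rw [Nat.cast_sub (nat_le_mul_self _)]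
      push_cast; ring
    have hn : ((n * n - n : ℕ) : ℝ) = (n : ℝ) ^ 2 - n := by
      rw [Nat.cast_sub (nat_le_mul_self _)]; push_cast; ring
    rw [← hcast, ← hn]
    exact_mod_cast hc
  have h2 : ∑ v : Fin n, (G.degree v : ℝ) = 2 * G.edgeFinset.card := by
    exact_mod_cast congrArg (Nat.cast : ℕ → ℝ) (SimpleGraph.sum_degrees_eq_twice_card_edges G)
  have h3 : (∑ v : Fin n, (G.degree v : ℝ)) ^ 2 ≤ (n : ℝ) * ∑ v : Fin n, (G.degree v : ℝ) ^ 2 := by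
    have := sq_sum_le_card_mul_sum_sq (s := (Finset.univ : Finset (Fin n)))
      (f := fun v => (G.degree v : ℝ))
    simpa [Finset.card_univ] using this
  have hsplit : ∑ v : Fin n, ((G.degree v : ℝ) ^ 2 - G.degree v)
      = (∑ v : Fin n, (G.degree v : ℝ) ^ 2) - ∑ v : Fin n, (G.degree v : ℝ) :=
    Finset.sum_sub_distrib _ _
  have hn0 : (0 : ℝ) ≤ n := Nat.cast_nonneg n
  have hsq : (∑ v : Fin n, (G.degree v : ℝ) ^ 2) ≤ (n : ℝ) ^ 2 - n + 2 * G.edgeFinset.card := by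
    rw [hsplit, h2] at h1; linarith
  have := mul_le_mul_of_nonneg_left hsq hn0
  rw [h2] at h3
  nlinarith

lemma c4free_bot {n : ℕ} : C4Free (⊥ : SimpleGraph (Fin n)) := by
  intro v w hc
  cases w with
  | nil => simp
  | cons h p => exact absurd h (by simp)

lemma exC4_mem (n : ℕ) :
    ∃ G : SimpleGraph (Fin n), C4Free G ∧ Nat.card G.edgeSet = exC4 n := by
  have hne : ({m | ∃ G : SimpleGraph (Fin n), C4Free G ∧ Nat.card G.edgeSet = m}).Nonempty :=
    ⟨0, ⊥, c4free_bot, by simp [SimpleGraph.edgeSet_bot]⟩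
  have hbdd : BddAbove {m | ∃ G : SimpleGraph (Fin n), C4Free G ∧ Nat.card G.edgeSet = m} := by
    refine ⟨Nat.card (Sym2 (Fin n)), fun m hm => ?_⟩
    obtain ⟨G, _, rfl⟩ := hm
    rw [Nat.card_coe_set_eq]
    calc G.edgeSet.ncard ≤ (Set.univ : Set (Sym2 (Fin n))).ncard :=
          Set.ncard_le_ncard (Set.subset_univ _) Set.finite_univ
      _ = Nat.card (Sym2 (Fin n)) := by rw [Set.ncard_univ]
  exact Nat.sSup_mem hne hbdd

lemma exC4_ub (m : ℕ) :
    4 * ((exC4 m : ℝ)) ^ 2 ≤ (m : ℝ) ^ 3 - (m : ℝ) ^ 2 + 2 * (exC4 m) * m := by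
  classical
  obtain ⟨G, hG, hcard⟩ := exC4_mem m
  have : Nat.card G.edgeSet = G.edgeFinset.card := by
    rw [Nat.card_eq_fintype_card, SimpleGraph.edgeFinset_card]
  rw [this] at hcard
  rw [← hcard]
  exact edge_bound G hG

lemma numeric (q r α e : ℝ) (hr1 : 1 ≤ r) (hr2 : 10 * r ≤ 3 * q)
    (ha2 : α ≤ 1)
    (hL : e ≥ q * (q + 1) ^ 2 / 2 - (α + 0.4) * r * q)
    (hub : 4 * e ^ 2 ≤ (q^2+q+1-3*r) ^ 3 - (q^2+q+1-3*r) ^ 2 + 2 * e * (q^2+q+1-3*r)) :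
    False := by
  have hq : (0:ℝ) < q := by linarith
  obtain ⟨N, hN⟩ : ∃ N : ℝ, N = q^2+q+1-3*r := ⟨_, rfl⟩
  obtain ⟨L, hLdef⟩ : ∃ L : ℝ, L = q * (q + 1) ^ 2 / 2 - 1.4 * r * q := ⟨_, rfl⟩
  rw [← hN] at hub
  have hL' : e ≥ L := by
    have h0 : (0:ℝ) ≤ r * q := by positivity
    have : (α + 0.4) * r * q ≤ 1.4 * r * q := by nlinarith
    rw [hLdef]; linarith
  have h1 : L ≥ N / 4 := by
    rw [hLdef, hN]
    nlinarith [mul_nonneg (show (0:ℝ) ≤ 3*q-10*r by linarith) (le_of_lt hq)]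
  have h2 : 4 * L ^ 2 - 2 * L * N ≤ 4 * e ^ 2 - 2 * e * N := by
    nlinarith [mul_nonneg (sub_nonneg.mpr hL') (show (0:ℝ) ≤ 4*(e+L)-2*N by linarith)]
  have hB : (0:ℝ) ≤ 3*q-10*r := by linarith
  have hr0 : (0:ℝ) ≤ r := by linarith
  have hrm1 : (0:ℝ) ≤ r - 1 := by linarith
  have key : 4 * L ^ 2 - 2 * L * N - (N ^ 3 - N ^ 2) =
      (479/250)*(3*q-10*r)*q^2*r + (177/50)*(3*q-10*r)*q*r + (9/5)*(3*q-10*r)*r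
      + 2*(r-1)*q^4 + 5*(r-1)*q^3 + 5*(r-1)*q^2 + 2*(r-1)*q
      + 27*r^3 + (7/5)*q^4*r + (463/250)*q^3*r + (429/50)*q^2*r + (52/5)*q*r + 3*r := by
    rw [hLdef, hN]; ring
  have h3 : 4 * L ^ 2 - 2 * L * N - (N ^ 3 - N ^ 2) > 0 := by
    rw [key]
    have t1 : (0:ℝ) ≤ (479/250)*(3*q-10*r)*q^2*r := by positivity
    have t2 : (0:ℝ) ≤ (177/50)*(3*q-10*r)*q*r := by positivity
    have t3 : (0:ℝ) ≤ (9/5)*(3*q-10*r)*r := by positivity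
    have t4 : (0:ℝ) ≤ 2*(r-1)*q^4 := by positivity
    have t5 : (0:ℝ) ≤ 5*(r-1)*q^3 := by positivity
    have t6 : (0:ℝ) ≤ 5*(r-1)*q^2 := by positivity
    have t7 : (0:ℝ) ≤ 2*(r-1)*q := by positivity
    have t8 : (0:ℝ) ≤ 27*r^3 := by positivity
    have t9 : (0:ℝ) ≤ (7/5)*q^4*r := by positivity
    have t10 : (0:ℝ) ≤ (463/250)*q^3*r := by positivity
    have t11 : (0:ℝ) ≤ (429/50)*q^2*r := by positivity
    have t12 : (0:ℝ) ≤ (52/5)*q*r := by positivity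
    linarith
  linarith

theorem stmt_4 (q r : ℕ) (α : ℝ) (hr1 : 1 ≤ r) (hr2 : (r : ℝ) ≤ 0.3 * q)
    (hα : 0.2 ≤ α ∧ α ≤ 1)
    (h : (exC4 (q ^ 2 + q + 1 - r) : ℝ) ≥ (q : ℝ) * (q + 1) ^ 2 / 2 - α * r * q) :
    ∃ r₀ : ℕ, r ≤ r₀ ∧ r₀ ≤ 3 * r ∧
      (exC4 (q ^ 2 + q + 1 - r₀) : ℝ) ≥ (q : ℝ) * (q + 1) ^ 2 / 2 - α * r₀ * q ∧
      (exC4 (q ^ 2 + q + 1 - r₀) : ℝ) - (exC4 (q ^ 2 + q - r₀) : ℝ) ≥ 0.2 * q := by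
  obtain ⟨ha1, ha2⟩ := hα
  have hq10r : 10 * r ≤ 3 * q := by
    have : (10 * r : ℝ) ≤ 3 * q := by linarith
    exact_mod_cast this
  by_contra hcon
  push_neg at hcon
  have main : ∀ k : ℕ, k ≤ 2 * r →
      (exC4 (q ^ 2 + q + 1 - (r + k)) : ℝ) ≥ (q : ℝ) * (q + 1) ^ 2 / 2 - α * r * q - 0.2 * q * k := by
    intro k
    induction k with
    | zero => intro _; simpa using h
    | succ k ih =>
      intro hk
      have ihb := ih (by omega)
      have hP : (exC4 (q ^ 2 + q + 1 - (r + k)) : ℝ)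
          ≥ (q : ℝ) * (q + 1) ^ 2 / 2 - α * ((r : ℝ) + k) * q := by
        have e1 : (0:ℝ) ≤ (α - 0.2) * k * q :=
          mul_nonneg (mul_nonneg (by linarith) (Nat.cast_nonneg k)) (Nat.cast_nonneg q)
        linarith [e1]
      have hdiff := hcon (r + k) (Nat.le_add_right r k) (by omega) (by push_cast; exact hP)
      have harg : q ^ 2 + q - (r + k) = q ^ 2 + q + 1 - (r + (k + 1)) := by omega
      rw [harg] at hdiff
      push_cast
      push_cast at ihb
      linarith
  have hfin := main (2 * r) le_rfl
  rw [show r + 2 * r = 3 * r from by ring] at hfin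
  have h3rq : 3 * r ≤ q := by omega
  have hle : 3 * r ≤ q ^ 2 + q + 1 :=
    le_trans h3rq (le_trans (Nat.le_add_left q (q ^ 2)) (Nat.le_succ _))
  have hM : ((q ^ 2 + q + 1 - 3 * r : ℕ) : ℝ) = (q : ℝ) ^ 2 + q + 1 - 3 * r := by
    rw [Nat.cast_sub hle]; push_cast; ring
  have hub := exC4_ub (q ^ 2 + q + 1 - 3 * r)
  rw [hM] at hub
  refine numeric (q : ℝ) (r : ℝ) α (exC4 (q ^ 2 + q + 1 - 3 * r) : ℝ)
    (by exact_mod_cast hr1) (by linarith) ha2 ?_ hub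
  push_cast at hfin
  linarith
end

section
/- For every prime power q, ex(q²+q+1, C4) ≥ q(q+1)²/2, where ex(n, C4) is the maximum number of edges in an n-vertex C4-free graph. -/
set_option maxHeartbeats 1000000

open Projectivization
open scoped LinearAlgebra.Projectivization

attribute [local instance] Classical.propDecidable

noncomputable section ERGraph

/-! ### Counting points of projectivizations -/

section PCount

variable {K V : Type*} [Field K] [Fintype K] [AddCommGroup V] [Module K V] [Fintype V] [Nontrivial V]

noncomputable instance : Fintype (ℙ K V) := by
  have : Finite (ℙ K V) := Quotient.finite _
  exact Fintype.ofFinite _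

private lemma unit_smul_ne_zero (c : Kˣ) {v : V} (hv : v ≠ 0) : c • v ≠ 0 := fun h =>
  hv (by simpa using congrArg (fun w => (c⁻¹ : Kˣ) • w) h)

lemma fiber_bij (z : ℙ K V) :
    Function.Bijective (fun c : Kˣ =>
      (⟨⟨c • z.rep, unit_smul_ne_zero c z.rep_nonzero⟩,
        by
          show Projectivization.mk K (c • z.rep) _ = z
          conv_rhs => rw [← z.mk_rep]
          exact (Projectivization.mk_eq_mk_iff K _ _ _ z.rep_nonzero).mpr ⟨c, rfl⟩⟩ :
      {v : {v : V // v ≠ 0} // Projectivization.mk K v.1 v.2 = z})) := by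
  constructor
  · intro c c' h
    have h2 : (c : K) • z.rep = (c' : K) • z.rep := by
      have := congrArg (fun x => (x.1 : V)) h
      simpa [Units.smul_def] using this
    have h3 : ((c : K) - (c' : K)) • z.rep = 0 := by rw [sub_smul, h2, sub_self]
    rcases smul_eq_zero.mp h3 with h4 | h4
    · exact Units.ext (sub_eq_zero.mp h4)
    · exact absurd h4 z.rep_nonzero
  · rintro ⟨⟨v, hv⟩, hz⟩
    have : Projectivization.mk K v hv = Projectivization.mk K z.rep z.rep_nonzero := by
      rw [Projectivization.mk_rep]; exact hz
    rw [Projectivization.mk_eq_mk_iff] at this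
    obtain ⟨a, ha⟩ := this
    exact ⟨a, Subtype.ext (Subtype.ext ha)⟩

lemma card_proj_mul :
    Fintype.card (ℙ K V) * (Fintype.card K - 1) = Fintype.card V - 1 := by
  classical
  have h1 : Fintype.card {v : V // v ≠ 0} = Fintype.card V - 1 := by
    simp [Fintype.card_subtype_compl]
  have h2 : Fintype.card {v : V // v ≠ 0}
      = Fintype.card ((z : ℙ K V) ×
        {v : {v : V // v ≠ 0} // Projectivization.mk K v.1 v.2 = z}) := by
    apply Fintype.card_congr
    exact (Equiv.sigmaFiberEquiv (fun v : {v : V // v ≠ 0} =>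
      Projectivization.mk K v.1 v.2)).symm
  rw [← h1, h2, Fintype.card_sigma]
  have h3 : ∀ z : ℙ K V,
      Fintype.card {v : {v : V // v ≠ 0} // Projectivization.mk K v.1 v.2 = z}
        = Fintype.card K - 1 := by
    intro z
    rw [← Fintype.card_congr (Equiv.ofBijective _ (fiber_bij z)), Fintype.card_units]
  simp [h3, Finset.sum_const, mul_comm]

end PCount

/-! ### The sub-projectivization of a submodule -/

section SubProj

variable {K V : Type*} [Field K] [AddCommGroup V] [Module K V]

lemma rep_mk_mem {W : Submodule K V} {v : V} (hv : v ≠ 0) (hvW : v ∈ W) :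
    (Projectivization.mk K v hv).rep ∈ W := by
  obtain ⟨a, ha⟩ := Projectivization.exists_smul_eq_mk_rep K v hv
  rw [← ha]
  exact W.smul_mem _ hvW

/-- The projectivization of a submodule is equivalent to the subtype of
projective points whose representative lies in the submodule. -/
def subProjEquiv (W : Submodule K V) :
    {z : ℙ K V // z.rep ∈ W} ≃ ℙ K W where
  toFun z := Projectivization.mk K (⟨z.1.rep, z.2⟩ : W)
    (fun h => z.1.rep_nonzero (congrArg Subtype.val h))
  invFun w := ⟨Projectivization.mk K (w.rep : V)
      (fun h => w.rep_nonzero (Subtype.ext h)),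
    rep_mk_mem _ (w.rep.2)⟩
  left_inv := by
    rintro ⟨z, hz⟩
    ext1
    dsimp only
    set w₀ : W := ⟨z.rep, hz⟩ with hw₀
    have hw₀ne : w₀ ≠ 0 := fun h => z.rep_nonzero (congrArg Subtype.val h)
    obtain ⟨a, ha⟩ := Projectivization.exists_smul_eq_mk_rep K w₀ hw₀ne
    have hval : ((Projectivization.mk K w₀ hw₀ne).rep : V) = a • z.rep := by
      rw [← ha]; rfl
    have : Projectivization.mk K ((Projectivization.mk K w₀ hw₀ne).rep : V)
        (fun h => (Projectivization.mk K w₀ hw₀ne).rep_nonzero (Subtype.ext h))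
        = Projectivization.mk K z.rep z.rep_nonzero := by
      rw [Projectivization.mk_eq_mk_iff]
      exact ⟨a, hval.symm⟩
    rw [this, Projectivization.mk_rep]
  right_inv := by
    intro w
    dsimp only
    conv_rhs => rw [← w.mk_rep]
    rw [Projectivization.mk_eq_mk_iff]
    set z := Projectivization.mk K (w.rep : V)
      (fun h => w.rep_nonzero (Subtype.ext h)) with hz
    obtain ⟨a, ha⟩ := Projectivization.exists_smul_eq_mk_rep K (w.rep : V)
      (fun h => w.rep_nonzero (Subtype.ext h))
    exact ⟨a, Subtype.ext ha⟩

end SubProj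

/-! ### Cardinality facts over a finite field -/

section Cards

variable {K : Type*} [Field K] [Fintype K]

lemma card_proj_eq_of_card {V : Type*} [AddCommGroup V] [Module K V] [Fintype V]
    [Nontrivial V] {c : ℕ}
    (hc : c * (Fintype.card K - 1) = Fintype.card V - 1) :
    Fintype.card (ℙ K V) = c := by
  have h := card_proj_mul (K := K) (V := V)
  have hK : 2 ≤ Fintype.card K := Fintype.one_lt_card
  have hpos : 0 < Fintype.card K - 1 := by omega
  exact Nat.eq_of_mul_eq_mul_right hpos (h.trans hc.symm)

lemma card_proj_dim2 {V : Type*} [AddCommGroup V] [Module K V] [Fintype V]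
    (h2 : Module.finrank K V = 2) :
    Fintype.card (ℙ K V) = Fintype.card K + 1 := by
  have hnt : Nontrivial V := by
    apply Module.nontrivial_of_finrank_pos (R := K); omega
  apply card_proj_eq_of_card
  have hcard : Fintype.card V = Fintype.card K ^ 2 := by
    rw [Module.card_eq_pow_finrank (K := K), h2]
  rw [hcard]
  have hK : 1 ≤ Fintype.card K := Fintype.card_pos
  obtain ⟨r, hr⟩ : ∃ r, Fintype.card K = r + 1 := ⟨Fintype.card K - 1, by omega⟩
  rw [hr]
  have h : (r + 1) ^ 2 = (r + 1 + 1) * ((r + 1) - 1) + 1 := by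
    simp [Nat.add_sub_cancel]; ring
  omega

lemma card_proj_dim3 {V : Type*} [AddCommGroup V] [Module K V] [Fintype V]
    (h3 : Module.finrank K V = 3) :
    Fintype.card (ℙ K V) = Fintype.card K ^ 2 + Fintype.card K + 1 := by
  have hnt : Nontrivial V := by
    apply Module.nontrivial_of_finrank_pos (R := K); omega
  apply card_proj_eq_of_card
  have hcard : Fintype.card V = Fintype.card K ^ 3 := by
    rw [Module.card_eq_pow_finrank (K := K), h3]
  rw [hcard]
  have hK : 1 ≤ Fintype.card K := Fintype.card_pos
  obtain ⟨r, hr⟩ : ∃ r, Fintype.card K = r + 1 := ⟨Fintype.card K - 1, by omega⟩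
  rw [hr]
  have h : (r + 1) ^ 3 = ((r + 1) ^ 2 + (r + 1) + 1) * ((r + 1) - 1) + 1 := by
    simp [Nat.add_sub_cancel]; ring
  omega

lemma card_subproj_dim2 {V : Type*} [AddCommGroup V] [Module K V] [Fintype V]
    [Nontrivial V] (W : Submodule K V) (h2 : Module.finrank K W = 2) :
    Fintype.card {z : ℙ K V // z.rep ∈ W} = Fintype.card K + 1 := by
  rw [Fintype.card_congr (subProjEquiv W)]
  exact card_proj_dim2 h2

end Cards

/-! ### The polarity form on `K³` -/

section Form

variable {K : Type*} [Field K]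

/-- The symmetric bilinear form underlying the polarity. -/
def polB (x y : Fin 3 → K) : K := x 0 * y 2 + x 1 * y 1 + x 2 * y 0

lemma polB_symm (x y : Fin 3 → K) : polB x y = polB y x := by unfold polB; ring

lemma polB_smul_left (c : K) (x y : Fin 3 → K) : polB (c • x) y = c * polB x y := by
  simp [polB]; ring

lemma polB_smul_right (c : K) (x y : Fin 3 → K) : polB x (c • y) = c * polB x y := by
  simp [polB]; ring

/-- `polB x ·` as a linear map. -/
def polBl (x : Fin 3 → K) : (Fin 3 → K) →ₗ[K] K where
  toFun y := polB x y
  map_add' y z := by simp [polB]; ring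
  map_smul' c y := by simp [polB]; ring

@[simp] lemma polBl_apply (x y : Fin 3 → K) : polBl x y = polB x y := rfl

lemma polB_nondeg {x : Fin 3 → K} (h : ∀ y, polB x y = 0) : x = 0 := by
  funext i
  fin_cases i
  · simpa [polB] using h (Pi.single 2 1)
  · simpa [polB] using h (Pi.single 1 1)
  · simpa [polB] using h (Pi.single 0 1)

lemma polBl_ne_zero {x : Fin 3 → K} (hx : x ≠ 0) : ∃ y, polB x y ≠ 0 := by
  by_contra h
  push_neg at h
  exact hx (polB_nondeg h)

lemma finrank_ker_polBl {x : Fin 3 → K} (hx : x ≠ 0) :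
    Module.finrank K (LinearMap.ker (polBl x)) = 2 := by
  have h := (polBl x).finrank_range_add_finrank_ker
  have hr : LinearMap.range (polBl x) = ⊤ := by
    obtain ⟨y, hy⟩ := polBl_ne_zero hx
    rw [LinearMap.range_eq_top]
    intro c
    exact ⟨(c * (polB x y)⁻¹) • y, by
      simp [polBl, polB_smul_right, mul_assoc, inv_mul_cancel₀ hy]⟩
  rw [hr, finrank_top] at h
  have h3 : Module.finrank K (Fin 3 → K) = 3 := Module.finrank_fin_fun K
  rw [h3] at h
  have h1 : Module.finrank K K = 1 := Module.finrank_self K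
  omega

/-- Same-kernel lemma: two non-proportional vectors have distinct polar kernels. -/
lemma ker_ne_of_indep {u v : Fin 3 → K} (hu : u ≠ 0) (hv : v ≠ 0)
    (hne : ∀ c : K, u ≠ c • v) :
    LinearMap.ker (polBl u) ≠ LinearMap.ker (polBl v) := by
  intro heq
  -- pick w with polB u w ≠ 0
  obtain ⟨w, hw⟩ := polBl_ne_zero hu
  have hwv : polB v w ≠ 0 := by
    intro h0
    have : w ∈ LinearMap.ker (polBl v) := by simpa using h0
    rw [← heq] at this
    simp at this
    exact hw this
  set c := polB u w / polB v w with hc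
  -- the functional polBl u - c • polBl v vanishes everywhere
  have hker : ∀ y, polB u y - c * polB v y = 0 := by
    have hWle : LinearMap.ker (polBl u) ≤ LinearMap.ker (polBl u - c • polBl v) := by
      intro y hy
      have hyu : polB u y = 0 := by simpa using hy
      have hyv : polB v y = 0 := by
        have : y ∈ LinearMap.ker (polBl v) := heq ▸ hy
        simpa using this
      simp [LinearMap.mem_ker, LinearMap.sub_apply, hyu, hyv]
    have hwk : w ∈ LinearMap.ker (polBl u - c • polBl v) := by
      simp [LinearMap.mem_ker, LinearMap.sub_apply, hc]
      field_simp
      ring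
    -- ker contains a 2-dim subspace and a vector outside it, so it is everything
    have hlt : LinearMap.ker (polBl u) < LinearMap.ker (polBl u - c • polBl v) := by
      apply lt_of_le_of_ne hWle
      intro habs
      have : w ∈ LinearMap.ker (polBl u) := habs ▸ hwk
      simp at this
      exact hw this
    have hrank : 2 < Module.finrank K (LinearMap.ker (polBl u - c • polBl v)) := by
      have := Submodule.finrank_lt_finrank_of_lt hlt
      rwa [finrank_ker_polBl hu] at this
    have htop : LinearMap.ker (polBl u - c • polBl v) = ⊤ := by
      apply Submodule.eq_top_of_finrank_eq
      have hle := Submodule.finrank_le (LinearMap.ker (polBl u - c • polBl v))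
      rw [Module.finrank_fin_fun K] at hle ⊢
      omega
    intro y
    have : y ∈ LinearMap.ker (polBl u - c • polBl v) := htop ▸ Submodule.mem_top
    simpa using this
  have : u - c • v = 0 := by
    apply polB_nondeg
    intro y
    have h1 : polB (u - c • v) y = polB u y - c * polB v y := by
      unfold polB; simp; ring
    rw [h1]; exact hker y
  exact hne c (by rwa [sub_eq_zero] at this)

/-- Two independent vectors: the orthogonal space is one-dimensional;
hence any two nonzero common solutions are proportional. -/
lemma common_orth_proportional {u v z z' : Fin 3 → K}
    (hu : u ≠ 0) (hv : v ≠ 0) (hne : ∀ c : K, u ≠ c • v)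
    (hz : z ≠ 0) (hz' : z' ≠ 0)
    (huz : polB u z = 0) (hvz : polB v z = 0)
    (huz' : polB u z' = 0) (hvz' : polB v z' = 0) :
    ∃ c : K, c • z = z' := by
  set Wu := LinearMap.ker (polBl u)
  set Wv := LinearMap.ker (polBl v)
  have hWu : Module.finrank K Wu = 2 := finrank_ker_polBl hu
  have hWv : Module.finrank K Wv = 2 := finrank_ker_polBl hv
  have hWne : Wu ≠ Wv := ker_ne_of_indep hu hv hne
  have hsup : Wu ⊔ Wv = ⊤ := by
    apply Submodule.eq_top_of_finrank_eq
    have h1 : Module.finrank K Wu ≤ Module.finrank K (Wu ⊔ Wv : Submodule K (Fin 3 → K)) :=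
      Submodule.finrank_mono le_sup_left
    have h2 := Submodule.finrank_le (Wu ⊔ Wv : Submodule K (Fin 3 → K))
    rw [Module.finrank_fin_fun K] at h2 ⊢
    rcases Nat.lt_or_ge (Module.finrank K (Wu ⊔ Wv : Submodule K (Fin 3 → K))) 3 with h | h
    · exfalso
      have heq1 : Wu = Wu ⊔ Wv := Submodule.eq_of_le_of_finrank_eq le_sup_left (by omega)
      have heq2 : Wv = Wu ⊔ Wv := Submodule.eq_of_le_of_finrank_eq le_sup_right (by
        have h1' : Module.finrank K Wv ≤ Module.finrank K (Wu ⊔ Wv : Submodule K (Fin 3 → K)) :=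
          Submodule.finrank_mono le_sup_right
        omega)
      exact hWne (heq1.trans heq2.symm)
    · omega
  have hinf : Module.finrank K (Wu ⊓ Wv : Submodule K (Fin 3 → K)) = 1 := by
    have := Submodule.finrank_sup_add_finrank_inf_eq Wu Wv
    rw [hsup, hWu, hWv, finrank_top, Module.finrank_fin_fun K] at this
    omega
  have hzm : z ∈ Wu ⊓ Wv := by
    simp [Wu, Wv, LinearMap.mem_ker, huz, hvz]
  have hzm' : z' ∈ Wu ⊓ Wv := by
    simp [Wu, Wv, LinearMap.mem_ker, huz', hvz']
  have hznz : (⟨z, hzm⟩ : (Wu ⊓ Wv : Submodule K (Fin 3 → K))) ≠ 0 := by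
    intro h; exact hz (congrArg Subtype.val h)
  obtain ⟨c, hc⟩ := (finrank_eq_one_iff_of_nonzero' (⟨z, hzm⟩ :
    (Wu ⊓ Wv : Submodule K (Fin 3 → K))) hznz).mp hinf ⟨z', hzm'⟩
  exact ⟨c, congrArg Subtype.val hc⟩

end Form

/-! ### The polarity graph -/

section Graph

variable (K : Type*) [Field K]

/-- The polarity (Erdős–Rényi) graph of `PG(2,q)`. -/
def polarityGraph : SimpleGraph (ℙ K (Fin 3 → K)) where
  Adj x y := x ≠ y ∧ polB x.rep y.rep = 0
  symm := by
    refine ⟨?_⟩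
    rintro x y ⟨hne, h⟩
    exact ⟨hne.symm, (polB_symm y.rep x.rep) ▸ h⟩
  loopless := ⟨fun x h => h.1 rfl⟩

variable {K}

lemma polarityGraph_adj {x y : ℙ K (Fin 3 → K)} :
    (polarityGraph K).Adj x y ↔ x ≠ y ∧ polB x.rep y.rep = 0 := Iff.rfl

/-- Two distinct vertices have at most one common neighbour. -/
lemma unique_common_neighbor {x y z z' : ℙ K (Fin 3 → K)} (hxy : x ≠ y)
    (hxz : (polarityGraph K).Adj x z) (hyz : (polarityGraph K).Adj y z)
    (hxz' : (polarityGraph K).Adj x z') (hyz' : (polarityGraph K).Adj y z') :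
    z = z' := by
  have hne : ∀ c : K, x.rep ≠ c • y.rep := by
    intro c hc
    apply hxy
    conv_lhs => rw [← x.mk_rep]
    conv_rhs => rw [← y.mk_rep]
    rw [Projectivization.mk_eq_mk_iff']
    exact ⟨c, hc.symm⟩
  obtain ⟨c, hc⟩ := common_orth_proportional x.rep_nonzero y.rep_nonzero hne
    z.rep_nonzero z'.rep_nonzero hxz.2 hyz.2 hxz'.2 hyz'.2
  have hcz : c ≠ 0 := by
    intro h; rw [h, zero_smul] at hc; exact z'.rep_nonzero hc.symm
  conv_lhs => rw [← z.mk_rep]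
  conv_rhs => rw [← z'.mk_rep]
  rw [Projectivization.mk_eq_mk_iff']
  exact ⟨c⁻¹, by rw [← hc, smul_smul, inv_mul_cancel₀ hcz, one_smul]⟩

/-- The polarity graph has no 4-cycles. -/
lemma polarityGraph_C4Free (v : ℙ K (Fin 3 → K))
    (w : (polarityGraph K).Walk v v) (hcyc : w.IsCycle) : w.length ≠ 4 := by
  intro hlen
  cases w with
  | nil => simp at hlen
  | cons h1 p =>
    cases p with
    | nil => simp at hlen
    | cons h2 p =>
      cases p with
      | nil => simp at hlen
      | cons h3 p =>
        cases p with
        | nil => simp at hlen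
        | cons h4 p =>
          have hp : p.length = 0 := by
            simp only [SimpleGraph.Walk.length_cons] at hlen
            omega
          cases p with
          | cons h5 p => simp at hp
          | nil =>
            rename_i a b c
            have hnd := hcyc.2
            simp [SimpleGraph.Walk.support_cons] at hnd
            have hvb : v ≠ b := fun h => hnd.2.1.2 (h.symm)
            have hac : a ≠ c := hnd.1.2.1
            exact hac (unique_common_neighbor hvb h1 ((polarityGraph K).adj_symm h2)
              ((polarityGraph K).adj_symm h4) h3)

end Graph

/-! ### Counting in the polarity graph -/

section GraphCount

variable {K : Type*} [Field K] [Fintype K]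

lemma card_polar (x : ℙ K (Fin 3 → K)) :
    Fintype.card {z : ℙ K (Fin 3 → K) // polB x.rep z.rep = 0}
      = Fintype.card K + 1 := by
  have hiff : ∀ z : ℙ K (Fin 3 → K),
      polB x.rep z.rep = 0 ↔ z.rep ∈ LinearMap.ker (polBl x.rep) := by
    intro z; simp [LinearMap.mem_ker]
  rw [Fintype.card_congr (Equiv.subtypeEquivRight hiff)]
  exact card_subproj_dim2 _ (finrank_ker_polBl x.rep_nonzero)

lemma degree_polarity_ge (x : ℙ K (Fin 3 → K)) :
    Fintype.card K + 1 ≤ (polarityGraph K).degree x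
      + (if polB x.rep x.rep = 0 then 1 else 0) := by
  classical
  set A := Finset.univ.filter (fun z : ℙ K (Fin 3 → K) => polB x.rep z.rep = 0) with hAdef
  have hA : A.card = Fintype.card K + 1 := by
    rw [← card_polar x, Fintype.card_subtype]
  have hdeg : (polarityGraph K).degree x = (A.filter (fun z => ¬ z = x)).card := by
    unfold SimpleGraph.degree
    congr 1
    ext z
    simp [SimpleGraph.mem_neighborFinset, polarityGraph_adj, hAdef, Finset.mem_filter]
    tauto
  have hsplit := Finset.card_filter_add_card_filter_not
    (s := A) (p := fun z => ¬ z = x)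
  have hle1 : (A.filter (fun z => ¬¬z = x)).card ≤ (if polB x.rep x.rep = 0 then 1 else 0) := by
    by_cases hx : polB x.rep x.rep = 0
    · rw [if_pos hx]
      calc (A.filter (fun z => ¬¬z = x)).card ≤ ({x} : Finset _).card := by
            apply Finset.card_le_card
            intro z hz
            simp at hz ⊢
            exact hz.2
        _ = 1 := Finset.card_singleton x
    · rw [if_neg hx]
      have : A.filter (fun z => ¬¬z = x) = ∅ := by
        apply Finset.eq_empty_of_forall_notMem
        intro z hz
        simp [hAdef] at hz
        exact hx (hz.2 ▸ hz.1)
      rw [this, Finset.card_empty]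
  omega

lemma card_absolute_le :
    Fintype.card {x : ℙ K (Fin 3 → K) // polB x.rep x.rep = 0}
      ≤ Fintype.card K + 1 := by
  classical
  by_cases h2 : (2 : K) = 0
  · -- characteristic 2 : absolute points form the line x₁ = 0
    have key : ∀ r : Fin 3 → K, polB r r = r 1 ^ 2 := by
      intro r
      unfold polB
      linear_combination (r 0 * r 2) * h2
    have he : (![0, 1, 0] : Fin 3 → K) ≠ 0 := by
      intro h
      have := congrFun h 1
      simp at this
    have hiff : ∀ x : ℙ K (Fin 3 → K),
        polB x.rep x.rep = 0 ↔ x.rep ∈ LinearMap.ker (polBl ![0, 1, 0]) := by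
      intro x
      rw [key, LinearMap.mem_ker]
      have : polBl (![0, 1, 0] : Fin 3 → K) x.rep = x.rep 1 := by
        simp [polBl, polB]
      rw [this, pow_eq_zero_iff (two_ne_zero (α := ℕ))]
    rw [Fintype.card_congr (Equiv.subtypeEquivRight hiff)]
    exact le_of_eq (card_subproj_dim2 _ (finrank_ker_polBl he))
  · -- odd characteristic : inject into `Option K`
    have hcard : Fintype.card (Option K) = Fintype.card K + 1 := by simp
    rw [← hcard]
    apply Fintype.card_le_of_injective
      (fun x => if x.1.rep 0 = 0 then none else some (x.1.rep 1 / x.1.rep 0))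
    rintro ⟨x, hx⟩ ⟨y, hy⟩ h
    simp only at h
    have hr : x.rep 1 ^ 2 + 2 * (x.rep 0 * x.rep 2) = 0 := by
      unfold polB at hx; linear_combination hx
    have hs : y.rep 1 ^ 2 + 2 * (y.rep 0 * y.rep 2) = 0 := by
      unfold polB at hy; linear_combination hy
    ext1
    show x = y
    conv_lhs => rw [← x.mk_rep]
    conv_rhs => rw [← y.mk_rep]
    rw [Projectivization.mk_eq_mk_iff']
    by_cases hx0 : x.rep 0 = 0
    · by_cases hy0 : y.rep 0 = 0
      · -- both are the point (0,0,1)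
        have hr1 : x.rep 1 = 0 := by
          have : x.rep 1 ^ 2 = 0 := by linear_combination hr - 2 * x.rep 2 * hx0
          exact pow_eq_zero_iff (two_ne_zero (α := ℕ)) |>.mp this
        have hs1 : y.rep 1 = 0 := by
          have : y.rep 1 ^ 2 = 0 := by linear_combination hs - 2 * y.rep 2 * hy0
          exact pow_eq_zero_iff (two_ne_zero (α := ℕ)) |>.mp this
        have hr2 : x.rep 2 ≠ 0 := by
          intro hr2
          apply x.rep_nonzero
          funext i
          fin_cases i <;> simp [hx0, hr1, hr2]
        have hs2 : y.rep 2 ≠ 0 := by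
          intro hs2
          apply y.rep_nonzero
          funext i
          fin_cases i <;> simp [hy0, hs1, hs2]
        refine ⟨x.rep 2 / y.rep 2, ?_⟩
        funext i
        fin_cases i <;>
          simp [Pi.smul_apply, smul_eq_mul, hx0, hy0, hr1, hs1]
        field_simp
      · rw [if_pos hx0, if_neg hy0] at h
        exact absurd h (by simp)
    · by_cases hy0 : y.rep 0 = 0
      · rw [if_neg hx0, if_pos hy0] at h
        exact absurd h (by simp)
      · rw [if_neg hx0, if_neg hy0, Option.some_inj] at h
        have hcross : x.rep 1 * y.rep 0 = y.rep 1 * x.rep 0 := by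
          field_simp at h
          linear_combination h
        have h2' : (2 : K) ≠ 0 := h2
        have e1 : x.rep 2 = -(x.rep 1 ^ 2) / (2 * x.rep 0) := by
          field_simp
          linear_combination hr
        have e2 : y.rep 2 = -(y.rep 1 ^ 2) / (2 * y.rep 0) := by
          field_simp
          linear_combination hs
        have e3 : x.rep 1 = x.rep 0 * y.rep 1 / y.rep 0 := by
          field_simp
          linear_combination hcross
        refine ⟨x.rep 0 / y.rep 0, ?_⟩
        funext i
        fin_cases i
        · show x.rep 0 / y.rep 0 * y.rep 0 = x.rep 0
          field_simp
        · show x.rep 0 / y.rep 0 * y.rep 1 = x.rep 1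
          rw [e3]; ring
        · show x.rep 0 / y.rep 0 * y.rep 2 = x.rep 2
          rw [e1, e2, e3]
          field_simp

lemma polarity_edge_bound :
    Fintype.card K * (Fintype.card K + 1) ^ 2
      ≤ 2 * (polarityGraph K).edgeFinset.card := by
  classical
  have hsum : ∑ x : ℙ K (Fin 3 → K), (polarityGraph K).degree x
      = 2 * (polarityGraph K).edgeFinset.card :=
    SimpleGraph.sum_degrees_eq_twice_card_edges _
  have hN : Fintype.card (ℙ K (Fin 3 → K))
      = Fintype.card K ^ 2 + Fintype.card K + 1 :=
    card_proj_dim3 (Module.finrank_fin_fun K)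
  have habs : (Finset.univ.filter
      (fun x : ℙ K (Fin 3 → K) => polB x.rep x.rep = 0)).card
        ≤ Fintype.card K + 1 := by
    rw [← Fintype.card_subtype]
    exact card_absolute_le
  have h1 : (Fintype.card K ^ 2 + Fintype.card K + 1) * (Fintype.card K + 1)
      ≤ (∑ x : ℙ K (Fin 3 → K), (polarityGraph K).degree x)
        + (Finset.univ.filter
          (fun x : ℙ K (Fin 3 → K) => polB x.rep x.rep = 0)).card := by
    calc (Fintype.card K ^ 2 + Fintype.card K + 1) * (Fintype.card K + 1)
        = ∑ _x : ℙ K (Fin 3 → K), (Fintype.card K + 1) := by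
          rw [Finset.sum_const, Finset.card_univ, hN, smul_eq_mul]
      _ ≤ ∑ x : ℙ K (Fin 3 → K), ((polarityGraph K).degree x
            + (if polB x.rep x.rep = 0 then 1 else 0)) :=
          Finset.sum_le_sum (fun x _ => degree_polarity_ge x)
      _ = (∑ x : ℙ K (Fin 3 → K), (polarityGraph K).degree x)
            + ∑ x : ℙ K (Fin 3 → K), (if polB x.rep x.rep = 0 then 1 else 0) :=
          Finset.sum_add_distrib
      _ = _ := by rw [Finset.card_filter]
  rw [hsum] at h1
  have hid : (Fintype.card K ^ 2 + Fintype.card K + 1) * (Fintype.card K + 1)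
      = Fintype.card K * (Fintype.card K + 1) ^ 2 + (Fintype.card K + 1) := by ring
  omega

lemma polarity_C4Free : C4Free (polarityGraph K) := polarityGraph_C4Free

end GraphCount

end ERGraph

section Transfer

variable {K : Type*} [Field K] [Fintype K]

lemma exists_good_graph (n : ℕ) (hn : Fintype.card (ℙ K (Fin 3 → K)) = n) :
    ∃ G : SimpleGraph (Fin n), C4Free G ∧
      Nat.card G.edgeSet = (polarityGraph K).edgeFinset.card := by
  classical
  let e : ℙ K (Fin 3 → K) ≃ Fin n := Fintype.equivFinOfCardEq hn
  let G' : SimpleGraph (Fin n) :=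
    { Adj := fun a b => (polarityGraph K).Adj (e.symm a) (e.symm b)
      symm := ⟨fun a b h => (polarityGraph K).adj_symm h⟩
      loopless := ⟨fun a h => (polarityGraph K).irrefl h⟩ }
  have iso : polarityGraph K ≃g G' :=
    { toEquiv := e
      map_rel_iff' := by
        intro a b
        show (polarityGraph K).Adj (e.symm (e a)) (e.symm (e b)) ↔ _
        rw [Equiv.symm_apply_apply, Equiv.symm_apply_apply] }
  refine ⟨G', ?_, ?_⟩
  · intro v w hcyc hlen
    have hinj : Function.Injective iso.symm.toHom := iso.symm.injective
    have hcyc' := hcyc.map hinj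
    exact polarityGraph_C4Free _ (w.map iso.symm.toHom) hcyc'
      (by rw [SimpleGraph.Walk.length_map]; exact hlen)
  · rw [← Nat.card_congr iso.mapEdgeSet, Nat.card_eq_fintype_card,
      ← SimpleGraph.edgeFinset_card]

end Transfer

theorem stmt_7 (q : ℕ) (hq : IsPrimePow q) :
    (exC4 (q ^ 2 + q + 1) : ℝ) ≥ (q : ℝ) * (q + 1) ^ 2 / 2 := by
  classical
  obtain ⟨p, k, hp, hk, rfl⟩ := hq
  haveI : Fact p.Prime := ⟨hp.nat_prime⟩
  set K := GaloisField p k with hKdef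
  haveI : Fintype K := Fintype.ofFinite _
  have hK : Fintype.card K = p ^ k := by
    rw [← Nat.card_eq_fintype_card]
    exact GaloisField.card p k hk.ne'
  set q := p ^ k with hqdef
  have hcard : Fintype.card (ℙ K (Fin 3 → K)) = q ^ 2 + q + 1 := by
    rw [card_proj_dim3 (Module.finrank_fin_fun K), hK]
  obtain ⟨G, hfree, hedges⟩ := exists_good_graph (K := K) _ hcard
  have hmem : (polarityGraph K).edgeFinset.card ∈
      {m | ∃ G : SimpleGraph (Fin (q ^ 2 + q + 1)), C4Free G ∧ Nat.card G.edgeSet = m} :=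
    ⟨G, hfree, hedges⟩
  have hbdd : BddAbove
      {m | ∃ G : SimpleGraph (Fin (q ^ 2 + q + 1)), C4Free G ∧ Nat.card G.edgeSet = m} := by
    refine ⟨Nat.card (Sym2 (Fin (q ^ 2 + q + 1))), ?_⟩
    rintro m ⟨G, -, rfl⟩
    exact Nat.card_le_card_of_injective _ Subtype.val_injective
  have hle : (polarityGraph K).edgeFinset.card ≤ exC4 (q ^ 2 + q + 1) :=
    le_csSup hbdd hmem
  have hbound : q * (q + 1) ^ 2 ≤ 2 * (polarityGraph K).edgeFinset.card := by
    have := polarity_edge_bound (K := K)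
    rwa [hK] at this
  have hfinal : q * (q + 1) ^ 2 ≤ 2 * exC4 (q ^ 2 + q + 1) := by omega
  rw [ge_iff_le, div_le_iff₀ (by norm_num : (0:ℝ) < 2)]
  have := (Nat.cast_le (α := ℝ)).mpr hfinal
  push_cast at this ⊢
  linarith
end

section
/- For all sufficiently large q and all integers r, s with 1 ≤ r ≤ 0.3q and k(q+2) ≤ s ≤ q²+2q where k = 0.55q (rounded to an integer), setting n = q²+q+1+r and m₀ = n(q+1)/2, the quantity G(q,r,s) = (n-s+k-1)(n-s+k-2)(n-k) - (2m₀-s+(k-1)·0.7q-nk+k)(2m₀-s+(k-1)·0.7q-nk-n+2k) is negative. -/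
set_option maxHeartbeats 2000000 in
theorem stmt_19 :
    ∃ q₀ : ℕ, ∀ (q r s : ℕ), q₀ ≤ q → 1 ≤ r → (r : ℝ) ≤ 0.3 * q →
      let k : ℝ := (⌊(0.55 : ℝ) * q⌋₊ : ℝ)
      let n : ℝ := (q : ℝ) ^ 2 + q + 1 + r
      let m₀ : ℝ := n * (q + 1) / 2
      k * (q + 2) ≤ s → (s : ℝ) ≤ (q : ℝ) ^ 2 + 2 * q →
      (n - s + k - 1) * (n - s + k - 2) * (n - k)
        - (2 * m₀ - s + (k - 1) * (0.7 * q) - n * k + k)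
          * (2 * m₀ - s + (k - 1) * (0.7 * q) - n * k - n + 2 * k) < 0 := by
  use 500
  intro q' r' s' hq' hr' hr2' k n m₀ hs1' hs2'
  show (n - s' + k - 1) * (n - s' + k - 2) * (n - k)
        - (2 * m₀ - s' + (k - 1) * (0.7 * q') - n * k + k)
          * (2 * m₀ - s' + (k - 1) * (0.7 * q') - n * k - n + 2 * k) < 0
  set q : ℝ := (q' : ℝ) with hqdef
  set r : ℝ := (r' : ℝ) with hrdef
  set s : ℝ := (s' : ℝ) with hsdef
  have hq : (500:ℝ) ≤ q := by rw [hqdef]; exact_mod_cast hq'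
  have hq0 : (0:ℝ) ≤ q := by linarith
  have hr1 : (1:ℝ) ≤ r := by rw [hrdef]; exact_mod_cast hr'
  have hr0 : (0:ℝ) ≤ r := by linarith
  have hv0 : (0:ℝ) ≤ r - 1 := by linarith
  have hw0 : (0:ℝ) ≤ 3/10*q - r := by
    have : r ≤ 0.3 * q := hr2'
    linarith [this]
  have hkk : k = (⌊(0.55 : ℝ) * q'⌋₊ : ℝ) := rfl
  have hkle : k ≤ 11/20 * q := by
    rw [hkk]
    have := Nat.floor_le (by positivity : (0:ℝ) ≤ (0.55:ℝ) * q')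
    calc (⌊(0.55 : ℝ) * q'⌋₊ : ℝ) ≤ (0.55:ℝ) * q' := this
      _ = 11/20 * q := by rw [hqdef]; norm_num
  have hkgt : 11/20 * q - 1 ≤ k := by
    rw [hkk]
    have := Nat.lt_floor_add_one ((0.55:ℝ) * q')
    have h2 : (0.55:ℝ) * q' = 11/20 * q := by rw [hqdef]; norm_num
    linarith [this]
  set t : ℝ := 11/20*q - k with htdef
  have ht0 : (0:ℝ) ≤ t := by simp only [htdef]; linarith
  have hu0 : (0:ℝ) ≤ 1 - t := by simp only [htdef]; linarith
  have hkq : k = 11/20*q - t := by simp only [htdef]; ring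
  have hn : n = q ^ 2 + q + 1 + r := rfl
  have hm : m₀ = n * (q + 1) / 2 := rfl
  have hs1 : k * (q + 2) ≤ s := hs1'
  have hs2 : s ≤ q ^ 2 + 2 * q := hs2'
  clear_value q r s t k n m₀
  rw [hm, hn]
  -- UB lemmas
  have hq5 : (0:ℝ) ≤ q^5 * (q - 500) := mul_nonneg (pow_nonneg hq0 5) (by linarith)
  have hq4 : (0:ℝ) ≤ q^4 * (q - 500) := mul_nonneg (pow_nonneg hq0 4) (by linarith)
  have hq3 : (0:ℝ) ≤ q^3 * (q - 500) := mul_nonneg (pow_nonneg hq0 3) (by linarith)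
  have hq2 : (0:ℝ) ≤ q^2 * (q - 500) := mul_nonneg (pow_nonneg hq0 2) (by linarith)
  have hq1 : (0:ℝ) ≤ q * (q - 500) := mul_nonneg hq0 (by linarith)
  have hub1 : (-9/8000)*q^5 + (8847/20000)*q^4 + (9383/8000)*q^3 + (21/20)*q^2 + (8/5)*q^1 < 0 := by linarith [hq4, hq3, hq2, hq1, hq]
  have hub2 : (-81/400)*q^6 + (-603/2000)*q^5 + (16791/20000)*q^4 + (18483/8000)*q^3 + (1519/400)*q^2 + (59/20)*q^1 + (4) < 0 := by linarith [hq5, hq4, hq3, hq2, hq1, hq]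
  have hG1 : ((q ^ 2 + q + 1 + r) - (k*(q+2)) + k - 1) * ((q ^ 2 + q + 1 + r) - (k*(q+2)) + k - 2) * ((q ^ 2 + q + 1 + r) - k)
        - (2 * ((q ^ 2 + q + 1 + r) * (q + 1) / 2) - (k*(q+2)) + (k - 1) * (7/10 * q) - (q ^ 2 + q + 1 + r) * k + k)
          * (2 * ((q ^ 2 + q + 1 + r) * (q + 1) / 2) - (k*(q+2)) + (k - 1) * (7/10 * q) - (q ^ 2 + q + 1 + r) * k - (q ^ 2 + q + 1 + r) + 2 * k) < 0 := by
    have d0 : (0:ℝ) ≤ (r - 1) := hv0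
    have d1 : (0:ℝ) ≤ (1 - t) := hu0
    have d2 : (0:ℝ) ≤ t := ht0
    have d3 : (0:ℝ) ≤ t * (1 - t) := (mul_nonneg ht0 hu0)
    have d4 : (0:ℝ) ≤ t^2 := (pow_nonneg ht0 2)
    have d5 : (0:ℝ) ≤ t^2 * (1 - t) := (mul_nonneg (pow_nonneg ht0 2) hu0)
    have d6 : (0:ℝ) ≤ r * (3/10*q - r) := (mul_nonneg hr0 hw0)
    have d7 : (0:ℝ) ≤ r * t := (mul_nonneg hr0 ht0)
    have d8 : (0:ℝ) ≤ r^2 * (3/10*q - r) := (mul_nonneg (pow_nonneg hr0 2) hw0)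
    have d9 : (0:ℝ) ≤ r^2 * (1 - t) := (mul_nonneg (pow_nonneg hr0 2) hu0)
    have d10 : (0:ℝ) ≤ r^2 * t^2 := (mul_nonneg (pow_nonneg hr0 2) (pow_nonneg ht0 2))
    have d11 : (0:ℝ) ≤ q * (r - 1) := (mul_nonneg hq0 hv0)
    have d12 : (0:ℝ) ≤ q * (3/10*q - r) := (mul_nonneg hq0 hw0)
    have d13 : (0:ℝ) ≤ q * (1 - t) := (mul_nonneg hq0 hu0)
    have d14 : (0:ℝ) ≤ q * t := (mul_nonneg hq0 ht0)
    have d15 : (0:ℝ) ≤ q * t * (1 - t) := (mul_nonneg (mul_nonneg hq0 ht0) hu0)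
    have d16 : (0:ℝ) ≤ q * t^2 := (mul_nonneg hq0 (pow_nonneg ht0 2))
    have d17 : (0:ℝ) ≤ q * t^2 * (1 - t) := (mul_nonneg (mul_nonneg hq0 (pow_nonneg ht0 2)) hu0)
    have d18 : (0:ℝ) ≤ q * r * (3/10*q - r) := (mul_nonneg (mul_nonneg hq0 hr0) hw0)
    have d19 : (0:ℝ) ≤ q * r * (1 - t) := (mul_nonneg (mul_nonneg hq0 hr0) hu0)
    have d20 : (0:ℝ) ≤ q * r * t * (1 - t) := (mul_nonneg (mul_nonneg (mul_nonneg hq0 hr0) ht0) hu0)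
    have d21 : (0:ℝ) ≤ q * r^2 * (1 - t) := (mul_nonneg (mul_nonneg hq0 (pow_nonneg hr0 2)) hu0)
    have d22 : (0:ℝ) ≤ q^2 * (r - 1) := (mul_nonneg (pow_nonneg hq0 2) hv0)
    have d23 : (0:ℝ) ≤ q^2 * (3/10*q - r) := (mul_nonneg (pow_nonneg hq0 2) hw0)
    have d24 : (0:ℝ) ≤ q^2 * (1 - t) := (mul_nonneg (pow_nonneg hq0 2) hu0)
    have d25 : (0:ℝ) ≤ q^2 * t := (mul_nonneg (pow_nonneg hq0 2) ht0)
    have d26 : (0:ℝ) ≤ q^2 * t * (1 - t) := (mul_nonneg (mul_nonneg (pow_nonneg hq0 2) ht0) hu0)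
    have d27 : (0:ℝ) ≤ q^2 * t^2 * (1 - t) := (mul_nonneg (mul_nonneg (pow_nonneg hq0 2) (pow_nonneg ht0 2)) hu0)
    have d28 : (0:ℝ) ≤ q^2 * r * (3/10*q - r) := (mul_nonneg (mul_nonneg (pow_nonneg hq0 2) hr0) hw0)
    have d29 : (0:ℝ) ≤ q^2 * r * (1 - t) := (mul_nonneg (mul_nonneg (pow_nonneg hq0 2) hr0) hu0)
    have d30 : (0:ℝ) ≤ q^2 * r * t^2 := (mul_nonneg (mul_nonneg (pow_nonneg hq0 2) hr0) (pow_nonneg ht0 2))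
    have d31 : (0:ℝ) ≤ q^3 * (3/10*q - r) := (mul_nonneg (pow_nonneg hq0 3) hw0)
    have d32 : (0:ℝ) ≤ q^3 * (1 - t) := (mul_nonneg (pow_nonneg hq0 3) hu0)
    have d33 : (0:ℝ) ≤ q^3 * t := (mul_nonneg (pow_nonneg hq0 3) ht0)
    have d34 : (0:ℝ) ≤ q^3 * t * (1 - t) := (mul_nonneg (mul_nonneg (pow_nonneg hq0 3) ht0) hu0)
    have d35 : (0:ℝ) ≤ q^3 * r * (1 - t) := (mul_nonneg (mul_nonneg (pow_nonneg hq0 3) hr0) hu0)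
    have d36 : (0:ℝ) ≤ q^4 * (3/10*q - r) := (mul_nonneg (pow_nonneg hq0 4) hw0)
    have d37 : (0:ℝ) ≤ q^4 * t := (mul_nonneg (pow_nonneg hq0 4) ht0)
    have hkq' := hkq
    rw [hkq']
    linarith [hub1, d0, d1, d2, d3, d4, d5, d6, d7, d8, d9, d10, d11, d12, d13, d14, d15, d16, d17, d18, d19, d20, d21, d22, d23, d24, d25, d26, d27, d28, d29, d30, d31, d32, d33, d34, d35, d36, d37]
  have hG2 : ((q ^ 2 + q + 1 + r) - (q^2+2*q) + k - 1) * ((q ^ 2 + q + 1 + r) - (q^2+2*q) + k - 2) * ((q ^ 2 + q + 1 + r) - k)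
        - (2 * ((q ^ 2 + q + 1 + r) * (q + 1) / 2) - (q^2+2*q) + (k - 1) * (7/10 * q) - (q ^ 2 + q + 1 + r) * k + k)
          * (2 * ((q ^ 2 + q + 1 + r) * (q + 1) / 2) - (q^2+2*q) + (k - 1) * (7/10 * q) - (q ^ 2 + q + 1 + r) * k - (q ^ 2 + q + 1 + r) + 2 * k) < 0 := by
    have e0 : (0:ℝ) ≤ (r - 1) := hv0
    have e1 : (0:ℝ) ≤ (1 - t) := hu0
    have e2 : (0:ℝ) ≤ t * (1 - t) := (mul_nonneg ht0 hu0)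
    have e3 : (0:ℝ) ≤ t^2 * (1 - t) := (mul_nonneg (pow_nonneg ht0 2) hu0)
    have e4 : (0:ℝ) ≤ r * t := (mul_nonneg hr0 ht0)
    have e5 : (0:ℝ) ≤ r^2 * (3/10*q - r) := (mul_nonneg (pow_nonneg hr0 2) hw0)
    have e6 : (0:ℝ) ≤ r^2 * t := (mul_nonneg (pow_nonneg hr0 2) ht0)
    have e7 : (0:ℝ) ≤ r^2 * t^2 := (mul_nonneg (pow_nonneg hr0 2) (pow_nonneg ht0 2))
    have e8 : (0:ℝ) ≤ q * (r - 1) := (mul_nonneg hq0 hv0)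
    have e9 : (0:ℝ) ≤ q * (3/10*q - r) := (mul_nonneg hq0 hw0)
    have e10 : (0:ℝ) ≤ q * (1 - t) := (mul_nonneg hq0 hu0)
    have e11 : (0:ℝ) ≤ q * t * (1 - t) := (mul_nonneg (mul_nonneg hq0 ht0) hu0)
    have e12 : (0:ℝ) ≤ q * r * (r - 1) := (mul_nonneg (mul_nonneg hq0 hr0) hv0)
    have e13 : (0:ℝ) ≤ q * r * (3/10*q - r) := (mul_nonneg (mul_nonneg hq0 hr0) hw0)
    have e14 : (0:ℝ) ≤ q * r * (1 - t) := (mul_nonneg (mul_nonneg hq0 hr0) hu0)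
    have e15 : (0:ℝ) ≤ q * r * t^2 := (mul_nonneg (mul_nonneg hq0 hr0) (pow_nonneg ht0 2))
    have e16 : (0:ℝ) ≤ q * r^2 * t := (mul_nonneg (mul_nonneg hq0 (pow_nonneg hr0 2)) ht0)
    have e17 : (0:ℝ) ≤ q^2 * (r - 1) := (mul_nonneg (pow_nonneg hq0 2) hv0)
    have e18 : (0:ℝ) ≤ q^2 * (3/10*q - r) := (mul_nonneg (pow_nonneg hq0 2) hw0)
    have e19 : (0:ℝ) ≤ q^2 * (1 - t) := (mul_nonneg (pow_nonneg hq0 2) hu0)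
    have e20 : (0:ℝ) ≤ q^2 * t * (1 - t) := (mul_nonneg (mul_nonneg (pow_nonneg hq0 2) ht0) hu0)
    have e21 : (0:ℝ) ≤ q^2 * r * (3/10*q - r) := (mul_nonneg (mul_nonneg (pow_nonneg hq0 2) hr0) hw0)
    have e22 : (0:ℝ) ≤ q^2 * r * t := (mul_nonneg (mul_nonneg (pow_nonneg hq0 2) hr0) ht0)
    have e23 : (0:ℝ) ≤ q^2 * r * t^2 := (mul_nonneg (mul_nonneg (pow_nonneg hq0 2) hr0) (pow_nonneg ht0 2))
    have e24 : (0:ℝ) ≤ q^3 * (r - 1) := (mul_nonneg (pow_nonneg hq0 3) hv0)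
    have e25 : (0:ℝ) ≤ q^3 * (3/10*q - r) := (mul_nonneg (pow_nonneg hq0 3) hw0)
    have e26 : (0:ℝ) ≤ q^3 * (1 - t) := (mul_nonneg (pow_nonneg hq0 3) hu0)
    have e27 : (0:ℝ) ≤ q^3 * t^2 := (mul_nonneg (pow_nonneg hq0 3) (pow_nonneg ht0 2))
    have e28 : (0:ℝ) ≤ q^3 * r * t := (mul_nonneg (mul_nonneg (pow_nonneg hq0 3) hr0) ht0)
    have e29 : (0:ℝ) ≤ q^4 * (r - 1) := (mul_nonneg (pow_nonneg hq0 4) hv0)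
    have e30 : (0:ℝ) ≤ q^4 * t := (mul_nonneg (pow_nonneg hq0 4) ht0)
    have e31 : (0:ℝ) ≤ q^4 * t^2 := (mul_nonneg (pow_nonneg hq0 4) (pow_nonneg ht0 2))
    have e32 : (0:ℝ) ≤ q^5 * t := (mul_nonneg (pow_nonneg hq0 5) ht0)
    have hkq' := hkq
    rw [hkq']
    linarith [hub2, e0, e1, e2, e3, e4, e5, e6, e7, e8, e9, e10, e11, e12, e13, e14, e15, e16, e17, e18, e19, e20, e21, e22, e23, e24, e25, e26, e27, e28, e29, e30, e31, e32]
  -- convexity step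
  have hBA : (0:ℝ) < (q^2 + 2*q) - k*(q+2) := by nlinarith [hkle, hq]
  have ha : (0:ℝ) ≤ q^2 + q + r - k := by nlinarith [hkle, hq, hr0]
  have hconv : (0:ℝ) ≤ (q^2 + q + r - k) * (s - k*(q+2)) * ((q^2 + 2*q) - s) * ((q^2 + 2*q) - k*(q+2)) := by
    apply mul_nonneg (mul_nonneg (mul_nonneg ha (by linarith)) (by linarith)) (by linarith)
  have hring : (((q ^ 2 + q + 1 + r) - s + k - 1) * ((q ^ 2 + q + 1 + r) - s + k - 2) * ((q ^ 2 + q + 1 + r) - k)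
        - (2 * ((q ^ 2 + q + 1 + r) * (q + 1) / 2) - s + (k - 1) * (7/10 * q) - (q ^ 2 + q + 1 + r) * k + k)
          * (2 * ((q ^ 2 + q + 1 + r) * (q + 1) / 2) - s + (k - 1) * (7/10 * q) - (q ^ 2 + q + 1 + r) * k - (q ^ 2 + q + 1 + r) + 2 * k)) * ((q^2 + 2*q) - k*(q+2))
      = (q^2 + q + r - k) * (s - k*(q+2)) * (s - (q^2 + 2*q)) * ((q^2 + 2*q) - k*(q+2))
        + ((q^2 + 2*q) - s) * (((q ^ 2 + q + 1 + r) - (k*(q+2)) + k - 1) * ((q ^ 2 + q + 1 + r) - (k*(q+2)) + k - 2) * ((q ^ 2 + q + 1 + r) - k)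
        - (2 * ((q ^ 2 + q + 1 + r) * (q + 1) / 2) - (k*(q+2)) + (k - 1) * (7/10 * q) - (q ^ 2 + q + 1 + r) * k + k)
          * (2 * ((q ^ 2 + q + 1 + r) * (q + 1) / 2) - (k*(q+2)) + (k - 1) * (7/10 * q) - (q ^ 2 + q + 1 + r) * k - (q ^ 2 + q + 1 + r) + 2 * k)) + (s - k*(q+2)) * (((q ^ 2 + q + 1 + r) - (q^2+2*q) + k - 1) * ((q ^ 2 + q + 1 + r) - (q^2+2*q) + k - 2) * ((q ^ 2 + q + 1 + r) - k)
        - (2 * ((q ^ 2 + q + 1 + r) * (q + 1) / 2) - (q^2+2*q) + (k - 1) * (7/10 * q) - (q ^ 2 + q + 1 + r) * k + k)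
          * (2 * ((q ^ 2 + q + 1 + r) * (q + 1) / 2) - (q^2+2*q) + (k - 1) * (7/10 * q) - (q ^ 2 + q + 1 + r) * k - (q ^ 2 + q + 1 + r) + 2 * k)) := by ring
  set G' : ℝ := max (((q ^ 2 + q + 1 + r) - (k*(q+2)) + k - 1) * ((q ^ 2 + q + 1 + r) - (k*(q+2)) + k - 2) * ((q ^ 2 + q + 1 + r) - k)
        - (2 * ((q ^ 2 + q + 1 + r) * (q + 1) / 2) - (k*(q+2)) + (k - 1) * (7/10 * q) - (q ^ 2 + q + 1 + r) * k + k)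
          * (2 * ((q ^ 2 + q + 1 + r) * (q + 1) / 2) - (k*(q+2)) + (k - 1) * (7/10 * q) - (q ^ 2 + q + 1 + r) * k - (q ^ 2 + q + 1 + r) + 2 * k)) (((q ^ 2 + q + 1 + r) - (q^2+2*q) + k - 1) * ((q ^ 2 + q + 1 + r) - (q^2+2*q) + k - 2) * ((q ^ 2 + q + 1 + r) - k)
        - (2 * ((q ^ 2 + q + 1 + r) * (q + 1) / 2) - (q^2+2*q) + (k - 1) * (7/10 * q) - (q ^ 2 + q + 1 + r) * k + k)
          * (2 * ((q ^ 2 + q + 1 + r) * (q + 1) / 2) - (q^2+2*q) + (k - 1) * (7/10 * q) - (q ^ 2 + q + 1 + r) * k - (q ^ 2 + q + 1 + r) + 2 * k)) with hG'def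
  have hG'neg : G' < 0 := max_lt hG1 hG2
  have e1 : ((q^2 + 2*q) - s) * (((q ^ 2 + q + 1 + r) - (k*(q+2)) + k - 1) * ((q ^ 2 + q + 1 + r) - (k*(q+2)) + k - 2) * ((q ^ 2 + q + 1 + r) - k)
        - (2 * ((q ^ 2 + q + 1 + r) * (q + 1) / 2) - (k*(q+2)) + (k - 1) * (7/10 * q) - (q ^ 2 + q + 1 + r) * k + k)
          * (2 * ((q ^ 2 + q + 1 + r) * (q + 1) / 2) - (k*(q+2)) + (k - 1) * (7/10 * q) - (q ^ 2 + q + 1 + r) * k - (q ^ 2 + q + 1 + r) + 2 * k)) ≤ ((q^2 + 2*q) - s) * G' :=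
    mul_le_mul_of_nonneg_left (le_max_left _ _) (by linarith)
  have e2 : (s - k*(q+2)) * (((q ^ 2 + q + 1 + r) - (q^2+2*q) + k - 1) * ((q ^ 2 + q + 1 + r) - (q^2+2*q) + k - 2) * ((q ^ 2 + q + 1 + r) - k)
        - (2 * ((q ^ 2 + q + 1 + r) * (q + 1) / 2) - (q^2+2*q) + (k - 1) * (7/10 * q) - (q ^ 2 + q + 1 + r) * k + k)
          * (2 * ((q ^ 2 + q + 1 + r) * (q + 1) / 2) - (q^2+2*q) + (k - 1) * (7/10 * q) - (q ^ 2 + q + 1 + r) * k - (q ^ 2 + q + 1 + r) + 2 * k)) ≤ (s - k*(q+2)) * G' :=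
    mul_le_mul_of_nonneg_left (le_max_right _ _) (by linarith)
  have hfin : (((q ^ 2 + q + 1 + r) - s + k - 1) * ((q ^ 2 + q + 1 + r) - s + k - 2) * ((q ^ 2 + q + 1 + r) - k)
        - (2 * ((q ^ 2 + q + 1 + r) * (q + 1) / 2) - s + (k - 1) * (7/10 * q) - (q ^ 2 + q + 1 + r) * k + k)
          * (2 * ((q ^ 2 + q + 1 + r) * (q + 1) / 2) - s + (k - 1) * (7/10 * q) - (q ^ 2 + q + 1 + r) * k - (q ^ 2 + q + 1 + r) + 2 * k)) * ((q^2 + 2*q) - k*(q+2)) < 0 := by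
    have h3 : ((q^2 + 2*q) - s) * G' + (s - k*(q+2)) * G' = ((q^2 + 2*q) - k*(q+2)) * G' := by ring
    have h4 : ((q^2 + 2*q) - k*(q+2)) * G' < 0 := mul_neg_of_pos_of_neg hBA hG'neg
    linarith [hring, hconv, e1, e2, h3, h4]
  by_contra hcon
  push_neg at hcon
  linarith [hfin, mul_nonneg hcon hBA.le]
end
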